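/- Let Γ be a finite simplicial graph with nontrivial vertex groups {G_i}. Then the commutator subgroup [W_Γ, W_Γ] of the right-angled Coxeter group W_Γ on Γ is a retract of the kernel K_Γ = ker(G_Γ → ∏ G_i). -/

import Mathlib

open Monoid
open scoped commutatorElement

namespace GPaper

variable {ι : Type*}

/-- The relator subgroup of the graph product: normal closure of commutators of
elements of vertex groups at adjacent vertices. -/
def Rels (Γ : SimpleGraph ι) (G : ι → Type*) [∀ i, Group (G i)] : Subgroup (Monoid.CoprodI G) :=
  Subgroup.normalClosure
    { x | ∃ (i j : ι) (g : G i) (h : G j), Γ.Adj i j ∧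
          x = ⁅Monoid.CoprodI.of g, Monoid.CoprodI.of h⁆ }

instance (Γ : SimpleGraph ι) (G : ι → Type*) [∀ i, Group (G i)] : (Rels Γ G).Normal :=
  Subgroup.normalClosure_normal

/-- The graph product of the groups `G i` over the simplicial graph `Γ`. -/
abbrev GP (Γ : SimpleGraph ι) (G : ι → Type*) [∀ i, Group (G i)] :=
  Monoid.CoprodI G ⧸ Rels Γ G

/-- The canonical inclusion of a vertex group into the graph product. -/
def of (Γ : SimpleGraph ι) (G : ι → Type*) [∀ i, Group (G i)] (i : ι) : G i →* GP Γ G :=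
  (QuotientGroup.mk' (Rels Γ G)).comp Monoid.CoprodI.of

/-- The canonical homomorphism from the graph product to the direct product. -/
def proj [DecidableEq ι] (Γ : SimpleGraph ι) (G : ι → Type*) [∀ i, Group (G i)] :
    GP Γ G →* (∀ i, G i) :=
  QuotientGroup.lift (Rels Γ G) (Monoid.CoprodI.lift (fun i => MonoidHom.mulSingle G i)) (by
    intro x hx
    refine Subgroup.normalClosure_le_normal ?_ hx
    rintro y ⟨i, j, g, h, hadj, rfl⟩
    have hij : i ≠ j := hadj.ne
    simp only [SetLike.mem_coe, MonoidHom.mem_ker, map_commutatorElement,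
      Monoid.CoprodI.lift_of]
    rw [commutatorElement_eq_one_iff_commute]
    exact Pi.mulSingle_commute hij g h)

/-- The canonical epimorphism `G_Γ → G_Γ'` when `Γ'` is obtained from `Γ` by adding edges. -/
def mapGraph (Γ Γ' : SimpleGraph ι) (hΓ : Γ ≤ Γ') (G : ι → Type*) [∀ i, Group (G i)] :
    GP Γ G →* GP Γ' G :=
  QuotientGroup.lift (Rels Γ G) (QuotientGroup.mk' (Rels Γ' G)) (by
    intro x hx
    rw [QuotientGroup.ker_mk']
    refine Subgroup.normalClosure_le_normal ?_ hx
    rintro y ⟨i, j, g, h, hadj, rfl⟩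
    exact Subgroup.subset_normalClosure ⟨i, j, g, h, hΓ hadj, rfl⟩)

/-- The element of the graph product represented by a word (list of syllables). -/
def wordProd (Γ : SimpleGraph ι) (G : ι → Type*) [∀ i, Group (G i)]
    (w : List (Σ i, G i)) : GP Γ G :=
  (w.map fun s => of Γ G s.1 s.2).prod

/-- The image of a word in the direct product of the vertex groups. -/
def piProd [DecidableEq ι] (G : ι → Type*) [∀ i, Group (G i)]
    (w : List (Σ i, G i)) : ∀ i, G i :=
  (w.map fun s => Pi.mulSingle s.1 s.2).prod

/-- The ordered product of those syllables of a word that belong to `G i`. -/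
def sylProd [DecidableEq ι] (G : ι → Type*) [∀ i, Group (G i)]
    (w : List (Σ i, G i)) (i : ι) : G i :=
  (w.filterMap fun s => if h : s.1 = i then some (cast (congrArg G h) s.2) else none).prod

/-- The normal (syllable) length of an element of a graph product:
the minimal number of syllables in a word representing it. -/
noncomputable def nl (Γ : SimpleGraph ι) (G : ι → Type*) [∀ i, Group (G i)]
    (g : GP Γ G) : ℕ :=
  sInf { n | ∃ w : List (Σ i, G i), wordProd Γ G w = g ∧ w.length = n }

section Phi

open scoped Classical

variable [DecidableEq ι] {G G' : ι → Type*} [∀ i, Group (G i)] [∀ i, Group (G' i)]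

/-- One step of the recursive construction of `Φ`: the new syllable
`f(π(w))⁻¹ · f(π(w)s)` (dropped if trivial), where `g = π(w)`. -/
noncomputable def phiStep (f : ∀ i, G i → G' i) (g : ∀ i, G i) (s : Σ i, G i) : List (Σ i, G' i) :=
  if (f s.1 (g s.1))⁻¹ * f s.1 (g s.1 * s.2) = 1 then []
  else [⟨s.1, (f s.1 (g s.1))⁻¹ * f s.1 (g s.1 * s.2)⟩]

/-- Auxiliary recursion: process the word left to right, carrying the
image `g` of the prefix in the direct product. -/
noncomputable def phiAux (f : ∀ i, G i → G' i) : (∀ i, G i) → List (Σ i, G i) → List (Σ i, G' i)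
  | _, [] => []
  | g, s :: w => phiStep f g s ++ phiAux f (g * Pi.mulSingle s.1 s.2) w

/-- The word map `Φ : S* → S'*` induced by the set maps `f i : G i → G' i`. -/
noncomputable def phiWord (f : ∀ i, G i → G' i) (w : List (Σ i, G i)) : List (Σ i, G' i) :=
  phiAux f 1 w

end Phi

end GPaper

/-!
Given pointed maps `f i : G i → G' i`, rewrite each syllable `s ∈ G i` of a word, read after a
prefix whose image in `∏ G i` is `g`, as `(f i (g i))⁻¹ * f i (g i * s)`. Carrying the image of the
prefix along in the regular wreath product `G'_Γ ≀ ∏ G i` makes this rewriting a homomorphism on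
all of `G_Γ`: syllables at adjacent vertices change disjoint coordinates of the prefix, so they
still commute. On `K_Γ` the prefix returns to `1`, which gives a homomorphism `K_Γ → K'_Γ`. This is
functorial in pointed maps and preserves identities, so a pointed map `C₂ → G i` with a pointed
left inverse makes `K(W_Γ)` a retract of `K_Γ`; and `K(W_Γ) = [W_Γ, W_Γ]` because the vertex groups
of `W_Γ` are abelian.
-/

namespace RegularWreathProduct

variable {D E Q Q' : Type*} [Group D] [Group E] [Group Q] [Group Q']

def mapLeft (φ : D →* E) : D ≀ᵣ Q →* E ≀ᵣ Q where
  toFun x := ⟨φ ∘ x.left, x.right⟩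
  map_one' := by ext <;> simp
  map_mul' x y := by ext <;> simp

@[simp] lemma mapLeft_left (φ : D →* E) (x : D ≀ᵣ Q) (q : Q) :
    (mapLeft φ x).left q = φ (x.left q) := rfl

def coboundary (F : Q → E) : Q →* E ≀ᵣ Q where
  toFun q := ⟨fun g => (F g)⁻¹ * F (q⁻¹ * g), q⟩
  map_one' := by ext <;> simp
  map_mul' a b := by ext <;> simp [mul_assoc]

@[simp] lemma coboundary_left (F : Q → E) (q g : Q) :
    (coboundary F q).left g = (F g)⁻¹ * F (q⁻¹ * g) := rfl

/-- Multiplicative because `Ψ` maps the base to the coboundary of `F`, which makes the evaluation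
points `(F g)⁻¹` line up. -/
def substitute (Ψ : D →* E ≀ᵣ Q') (F : Q → Q') :
    (mapLeft (rightHom.comp Ψ)).eqLocus ((coboundary F).comp rightHom) →* E ≀ᵣ Q where
  toFun x := ⟨fun g => (Ψ ((x : D ≀ᵣ Q).left g)).left (F g)⁻¹, (x : D ≀ᵣ Q).right⟩
  map_one' := by ext <;> simp
  map_mul' x y := by
    have hx g := congrArg (fun z => z.left g) x.2
    simp only [mapLeft_left, MonoidHom.coe_comp, Function.comp_apply, rightHom_eq_right,
      coboundary_left] at hx
    ext g
    · simp [hx]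
    · rfl

end RegularWreathProduct

lemma exists_pointed_retraction_multiplicative_zmod_two (H : Type*) [Group H] [Nontrivial H] :
    ∃ (s : Multiplicative (ZMod 2) → H) (r : H → Multiplicative (ZMod 2)),
      s 1 = 1 ∧ ∀ x, r (s x) = x := by
  classical
  obtain ⟨h, hh⟩ := exists_ne (1 : H)
  refine ⟨fun x => if x = 1 then 1 else h, fun y => if y = 1 then 1 else .ofAdd 1, if_pos rfl, ?_⟩
  intro x
  by_cases hx : x = 1
  · simp [hx]
  · simp only [hx, hh, if_false]
    revert x
    decide

namespace GPaper

open RegularWreathProduct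

variable {ι : Type*}

section

variable {Γ : SimpleGraph ι} {G G' G'' : ι → Type*} [∀ i, Group (G i)] [∀ i, Group (G' i)]
  [∀ i, Group (G'' i)]

lemma of_commute {i j : ι} (hij : Γ.Adj i j) (x : G i) (y : G j) :
    Commute (of Γ G i x) (of Γ G j y) := by
  have hmem : ⁅CoprodI.of x, CoprodI.of y⁆ ∈ Rels Γ G :=
    Subgroup.subset_normalClosure ⟨i, j, x, y, hij, rfl⟩
  simp only [← commutatorElement_eq_one_iff_commute, of, MonoidHom.comp_apply,
    ← map_commutatorElement]
  exact (QuotientGroup.eq_one_iff _).2 hmem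

lemma GP.hom_ext {M : Type*} [Monoid M] {φ ψ : GP Γ G →* M}
    (h : ∀ i s, φ (of Γ G i s) = ψ (of Γ G i s)) : φ = ψ :=
  QuotientGroup.monoidHom_ext _ <| CoprodI.ext_hom _ _ fun i => MonoidHom.ext (h i)

def GP.lift {M : Type*} [Group M] (φ : ∀ i, G i →* M)
    (hφ : ∀ i j, Γ.Adj i j → ∀ x y, Commute (φ i x) (φ j y)) : GP Γ G →* M :=
  QuotientGroup.lift _ (CoprodI.lift φ) <| Subgroup.normalClosure_le_normal <| by
    rintro _ ⟨i, j, x, y, hij, rfl⟩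
    simpa [map_commutatorElement, commutatorElement_eq_one_iff_commute] using hφ i j hij x y

@[simp] lemma GP.lift_of {M : Type*} [Group M] (φ : ∀ i, G i →* M)
    (hφ : ∀ i j, Γ.Adj i j → ∀ x y, Commute (φ i x) (φ j y)) (i : ι) (s : G i) :
    GP.lift φ hφ (of Γ G i s) = φ i s :=
  CoprodI.lift_of φ s

section KernelMap

variable [DecidableEq ι]

@[simp] lemma proj_of (i : ι) (s : G i) : proj Γ G (of Γ G i s) = Pi.mulSingle i s := by
  simp [proj, of]

/-- The base at `g` rewrites `s` as read after a prefix with image `g⁻¹`, since `≀ᵣ` translates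
the base of the right factor by the inverse of the left one. -/
def wreathOf (Γ : SimpleGraph ι) (f : ∀ i, G i → G' i) (i : ι) :
    G i →* GP Γ G' ≀ᵣ (∀ i, G i) where
  toFun s := ⟨fun g => of Γ G' i ((f i (g⁻¹ i))⁻¹ * f i (g⁻¹ i * s)), Pi.mulSingle i s⟩
  map_one' := by ext <;> simp
  map_mul' s t := by ext <;> simp [← map_mul, mul_assoc, Pi.mulSingle_mul]

lemma wreathOf_commute (f : ∀ i, G i → G' i) {i j : ι} (hij : Γ.Adj i j) (x : G i) (y : G j) :
    Commute (wreathOf Γ f i x) (wreathOf Γ f j y) := by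
  have hne : i ≠ j := hij.ne
  refine RegularWreathProduct.ext (funext fun g => ?_) ?_
  · simp only [wreathOf, MonoidHom.coe_mk, OneHom.coe_mk, mul_left, Pi.mul_apply, Pi.inv_apply,
      Pi.mulSingle_eq_of_ne hne, Pi.mulSingle_eq_of_ne hne.symm, inv_one, one_mul]
    exact (of_commute hij _ _).eq
  · exact (Pi.mulSingle_commute hne x y).eq

def toWreath (Γ : SimpleGraph ι) (f : ∀ i, G i → G' i) : GP Γ G →* GP Γ G' ≀ᵣ (∀ i, G i) :=
  GP.lift (wreathOf Γ f) fun _ _ hij => wreathOf_commute f hij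

@[simp] lemma toWreath_of (f : ∀ i, G i → G' i) (i : ι) (s : G i) :
    toWreath Γ f (of Γ G i s) = wreathOf Γ f i s :=
  GP.lift_of _ _ i s

lemma rightHom_comp_toWreath (f : ∀ i, G i → G' i) :
    rightHom.comp (toWreath Γ f) = proj Γ G :=
  GP.hom_ext fun i s => by simp [wreathOf]

@[simp] lemma toWreath_right (f : ∀ i, G i → G' i) (x : GP Γ G) :
    (toWreath Γ f x).right = proj Γ G x :=
  DFunLike.congr_fun (rightHom_comp_toWreath f) x

lemma mapLeft_proj_comp_toWreath (f : ∀ i, G i → G' i) :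
    (mapLeft (proj Γ G')).comp (toWreath Γ f) =
      (coboundary fun g => Pi.map f g⁻¹).comp (proj Γ G) := by
  refine GP.hom_ext fun i s => RegularWreathProduct.ext (funext fun g => funext fun j => ?_) rfl
  rcases eq_or_ne j i with rfl | hj
  · simp [wreathOf]
  · simp [wreathOf, Pi.mulSingle_eq_of_ne hj]

lemma proj_toWreath_left (f : ∀ i, G i → G' i) (x : GP Γ G) (g : ∀ i, G i) :
    proj Γ G' ((toWreath Γ f x).left g) = (Pi.map f g⁻¹)⁻¹ * Pi.map f (g⁻¹ * proj Γ G x) := by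
  have h := congrArg (fun y => y.left g) (DFunLike.congr_fun (mapLeft_proj_comp_toWreath f) x)
  simpa using h

lemma toWreath_id (x : GP Γ G) : toWreath Γ (fun _ => id) x = ⟨fun _ => x, proj Γ G x⟩ := by
  let diag : GP Γ G →* GP Γ G ≀ᵣ (∀ i, G i) :=
    { toFun y := ⟨fun _ => y, proj Γ G y⟩
      map_one' := by ext <;> simp
      map_mul' y z := by ext <;> simp }
  have h : toWreath Γ (fun _ => id) = diag :=
    GP.hom_ext fun i s => by ext <;> simp [wreathOf, diag]
  exact DFunLike.congr_fun h x

lemma toWreath_mem_eqLocus (f : ∀ i, G i → G' i) (f' : ∀ i, G' i → G'' i) (x : GP Γ G) :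
    toWreath Γ f x ∈ (mapLeft (rightHom.comp (toWreath Γ f'))).eqLocus
      ((coboundary fun g => Pi.map f g⁻¹).comp rightHom) := by
  rw [rightHom_comp_toWreath]
  exact (DFunLike.congr_fun (mapLeft_proj_comp_toWreath f) x).trans (by simp)

lemma substitute_toWreath (f : ∀ i, G i → G' i) (f' : ∀ i, G' i → G'' i) (x : GP Γ G) :
    substitute (toWreath Γ f') (fun g => Pi.map f g⁻¹)
        ⟨toWreath Γ f x, toWreath_mem_eqLocus f f' x⟩ =
      toWreath Γ (fun i => f' i ∘ f i) x := by
  have h : (substitute (toWreath Γ f') (fun g => Pi.map f g⁻¹)).comp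
      ((toWreath Γ f).codRestrict _ (toWreath_mem_eqLocus f f')) =
        toWreath Γ (fun i => f' i ∘ f i) :=
    GP.hom_ext fun i s => by ext <;> simp [substitute, wreathOf]
  exact DFunLike.congr_fun h x

def kerMap (Γ : SimpleGraph ι) (f : ∀ i, G i → G' i) : (proj Γ G).ker →* (proj Γ G').ker where
  toFun x := ⟨(toWreath Γ f x).left 1, by simp [proj_toWreath_left, MonoidHom.mem_ker.mp x.2]⟩
  map_one' := by ext; simp
  map_mul' x y := by ext; simp [MonoidHom.mem_ker.mp x.2]

lemma kerMap_id : kerMap Γ (fun i => @id (G i)) = MonoidHom.id _ := by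
  ext x
  simp [kerMap, toWreath_id]

lemma kerMap_comp (f : ∀ i, G i → G' i) (f' : ∀ i, G' i → G'' i) (hf : ∀ i, f i 1 = 1) :
    (kerMap Γ f').comp (kerMap Γ f) = kerMap Γ fun i => f' i ∘ f i := by
  ext x
  have h := congrArg (fun y => y.left 1) (substitute_toWreath f f' (x : GP Γ G))
  have hF : Pi.map f (1 : ∀ i, G i) = 1 := funext hf
  simpa [substitute, kerMap, hF] using h

lemma kerMap_comp_eq_id (s : ∀ i, G i → G' i) (r : ∀ i, G' i → G i) (hs : ∀ i, s i 1 = 1)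
    (hrs : ∀ i x, r i (s i x) = x) : (kerMap Γ r).comp (kerMap Γ s) = MonoidHom.id _ := by
  rw [kerMap_comp s r hs, ← kerMap_id]
  congr
  exact funext fun i => funext (hrs i)

lemma ker_proj_eq_commutator [Fintype ι] (A : ι → Type*) [∀ i, CommGroup (A i)] :
    (proj Γ A).ker = commutator (GP Γ A) := by
  refine le_antisymm (fun x hx => ?_) (Abelianization.commutator_subset_ker _)
  let σ : (∀ i, A i) →* Abelianization (GP Γ A) :=
    MonoidHom.noncommPiCoprod (fun i => Abelianization.of.comp (of Γ A i))
      fun _ _ _ _ _ => Commute.all _ _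
  have hσ : σ.comp (proj Γ A) = Abelianization.of :=
    GP.hom_ext fun i s => by
      rw [MonoidHom.comp_apply, proj_of]
      exact MonoidHom.noncommPiCoprod_mulSingle _ i s
  rw [← Abelianization.ker_of, ← hσ]
  simp [MonoidHom.mem_ker.mp hx]

end KernelMap

end

/-- If each vertex group is nontrivial, the commutator subgroup of the
right-angled Coxeter group on `Γ` (the graph product with all vertex groups of order 2)
is a retract of the kernel `K_Γ`. -/
theorem stmt12 {ι : Type*} [DecidableEq ι] [Fintype ι] (Γ : SimpleGraph ι)
    (G : ι → Type*) [∀ i, Group (G i)] [∀ i, Nontrivial (G i)] :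
    ∃ (j : (commutator (GP Γ (fun _ : ι => Multiplicative (ZMod 2))) : Subgroup _) →*
            (proj Γ G).ker)
      (r : (proj Γ G).ker →*
            (commutator (GP Γ (fun _ : ι => Multiplicative (ZMod 2))) : Subgroup _)),
      r.comp j = MonoidHom.id _ := by
  choose s r hs hrs using fun i => exists_pointed_retraction_multiplicative_zmod_two (G i)
  let e := MulEquiv.subgroupCongr
    (ker_proj_eq_commutator (Γ := Γ) fun _ => Multiplicative (ZMod 2))
  refine ⟨(kerMap Γ s).comp e.symm.toMonoidHom, e.toMonoidHom.comp (kerMap Γ r), ?_⟩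
  ext x
  simpa using congrArg e (DFunLike.congr_fun (kerMap_comp_eq_id s r hs hrs) (e.symm x))

end GPaper
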